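/- Let R > 0, let 𝕀⁻¹ be a 3×3 real matrix and χ ∈ ℝ³. There exists δ ∈ (0,1) such that for every Δt ∈ (0,δ], every w̄ ∈ ℝ with |w̄| ≤ √(4·|log Δt|·Δt), and every Π ∈ ℝ³ with ‖Π‖ = R, there exists a unique pair (A,B) with ‖A‖ ≤ 2R and ‖B‖ ≤ 2R solving the implicit one-step midpoint equations: d⁺(Δt,ξ,A) = Π and d⁺(Δt,ξ,B) = d⁻(Δt,ξ,A), where ξ := (1/2)𝕀⁻¹((A+B)/2) + (1/2)χ·(w̄/Δt). (Equivalently, the contraction map F of the scheme has a unique fixed point in the product of closed balls of radius 2R.) -/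

import Mathlib

open Matrix
open RealInnerProductSpace

noncomputable section

/-- The Euclidean norm on `ℝ³ = Fin 3 → ℝ`. -/
def e3norm (v : Fin 3 → ℝ) : ℝ := Real.sqrt (v ⬝ᵥ v)

/-- `d⁺(h,ξ,Π) = Π + (h/2) ξ×Π − (h²/4)(ξ·Π)ξ`. -/
def dplus (h : ℝ) (ξ Pv : Fin 3 → ℝ) : Fin 3 → ℝ :=
  Pv + (h / 2) • (ξ ⨯₃ Pv) - (h ^ 2 / 4 * (ξ ⬝ᵥ Pv)) • ξ

/-- `d⁻(h,ξ,Π) = Π − (h/2) ξ×Π − (h²/4)(ξ·Π)ξ`. -/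
def dminus (h : ℝ) (ξ Pv : Fin 3 → ℝ) : Fin 3 → ℝ :=
  Pv - (h / 2) • (ξ ⨯₃ Pv) - (h ^ 2 / 4 * (ξ ⬝ᵥ Pv)) • ξ

namespace MidAux

abbrev E3 := EuclideanSpace ℝ (Fin 3)

-- sanity defeq checks
example (u v : E3) : (u + v : E3) = (u + v : Fin 3 → ℝ) := rfl
example (r : ℝ) (u : E3) : (r • u : E3) = (r • u : Fin 3 → ℝ) := rfl

def cp (u v : E3) : E3 := WithLp.toLp 2 (u ⨯₃ v)

lemma dot_eq_inner (u v : E3) : u ⬝ᵥ v = ⟪u, v⟫ := by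
  simp [PiLp.inner_apply, dotProduct, mul_comm]

lemma norm_sq_eq_dot (v : E3) : ‖v‖ ^ 2 = v ⬝ᵥ v := by
  rw [dot_eq_inner, real_inner_self_eq_norm_sq]

lemma abs_dot_le (u v : E3) : |u ⬝ᵥ v| ≤ ‖u‖ * ‖v‖ := by
  rw [dot_eq_inner]; exact abs_real_inner_le_norm u v

lemma norm_cp_le (u v : E3) : ‖cp u v‖ ≤ ‖u‖ * ‖v‖ := by
  have h1 : ‖cp u v‖ ^ 2 ≤ (‖u‖ * ‖v‖) ^ 2 := by
    have hd : (cp u v) ⬝ᵥ (cp u v) = (u ⨯₃ v) ⬝ᵥ (u ⨯₃ v) := rfl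
    rw [norm_sq_eq_dot, hd, cross_dot_cross, mul_pow, norm_sq_eq_dot, norm_sq_eq_dot]
    rw [dotProduct_comm v u]
    nlinarith [sq_nonneg (u ⬝ᵥ v)]
  have h2 : (0:ℝ) ≤ ‖u‖ * ‖v‖ := by positivity
  nlinarith [norm_nonneg (cp u v)]

lemma e3norm_eq (v : E3) : e3norm v = ‖v‖ := by
  rw [e3norm, ← norm_sq_eq_dot, Real.sqrt_sq (norm_nonneg v)]

/-- The "perturbation" part of `d⁺`, written in terms of `η = h • ξ`. -/
def Pp (η X : E3) : E3 := (1/2 : ℝ) • cp η X - (1/4 * (η ⬝ᵥ X)) • η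

lemma dplus_eq (h : ℝ) (ξ X : E3) : dplus h ξ X = X + Pp (h • ξ) X := by
  funext i
  fin_cases i <;>
    simp [dplus, Pp, cp, cross_apply, dotProduct, Fin.sum_univ_three, Pi.smul_apply,
      smul_eq_mul, Matrix.vecHead, Matrix.vecTail, Function.comp] <;> ring

lemma dminus_eq (h : ℝ) (ξ X : E3) : dminus h ξ X = X + Pp (-(h • ξ)) X := by
  funext i
  fin_cases i <;>
    simp [dminus, Pp, cp, cross_apply, dotProduct, Fin.sum_univ_three, Pi.smul_apply,
      smul_eq_mul, Matrix.vecHead, Matrix.vecTail, Function.comp] <;> ring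

lemma Pp_norm_le (η X : E3) (hη : ‖η‖ ≤ 1) : ‖Pp η X‖ ≤ ‖η‖ * ‖X‖ := by
  have h1 : ‖Pp η X‖ ≤ ‖(1/2 : ℝ) • cp η X‖ + ‖(1/4 * (η ⬝ᵥ X)) • η‖ := norm_sub_le _ _
  rw [norm_smul, norm_smul, Real.norm_eq_abs, Real.norm_eq_abs] at h1
  have h2 := norm_cp_le η X
  have h3 := abs_dot_le η X
  have h5 : |1/4 * (η ⬝ᵥ X)| = 1/4 * |η ⬝ᵥ X| := by rw [abs_mul]; norm_num
  rw [h5] at h1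
  have h6 : |(1/2 : ℝ)| = 1/2 := by norm_num
  rw [h6] at h1
  nlinarith [norm_nonneg η, norm_nonneg X, abs_nonneg (η ⬝ᵥ X),
    mul_nonneg (norm_nonneg η) (norm_nonneg X)]

lemma Pp_diff_eq (η η' X X' : E3) :
    Pp η X - Pp η' X' =
      (1/2 : ℝ) • cp (η - η') X + (1/2 : ℝ) • cp η' (X - X')
        - (1/4 * ((η - η') ⬝ᵥ X)) • η - (1/4 * (η' ⬝ᵥ (X - X'))) • η
        - (1/4 * (η' ⬝ᵥ X')) • (η - η') := by
  ext i
  fin_cases i <;>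
    simp [Pp, cp, cross_apply, dotProduct, Fin.sum_univ_three, Pi.smul_apply,
      smul_eq_mul, Matrix.vecHead, Matrix.vecTail, Function.comp] <;> ring

lemma Pp_diff_le (η η' X X' : E3) (r : ℝ) (hη : ‖η‖ ≤ 1) (hη' : ‖η'‖ ≤ 1)
    (hX : ‖X‖ ≤ r) (hX' : ‖X'‖ ≤ r) :
    ‖Pp η X - Pp η' X'‖ ≤ r * ‖η - η'‖ + ‖η'‖ * ‖X - X'‖ := by
  have hr : (0:ℝ) ≤ r := le_trans (norm_nonneg X) hX
  rw [Pp_diff_eq]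
  set a := (1/2 : ℝ) • cp (η - η') X
  set b := (1/2 : ℝ) • cp η' (X - X')
  set c := (1/4 * ((η - η') ⬝ᵥ X)) • η
  set d := (1/4 * (η' ⬝ᵥ (X - X'))) • η
  set e := (1/4 * (η' ⬝ᵥ X')) • (η - η')
  have t : ‖a + b - c - d - e‖ ≤ ‖a‖ + ‖b‖ + ‖c‖ + ‖d‖ + ‖e‖ := by
    calc ‖a + b - c - d - e‖ ≤ ‖a + b - c - d‖ + ‖e‖ := norm_sub_le _ _
      _ ≤ ‖a + b - c‖ + ‖d‖ + ‖e‖ := by gcongr; exact norm_sub_le _ _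
      _ ≤ ‖a + b‖ + ‖c‖ + ‖d‖ + ‖e‖ := by gcongr; exact norm_sub_le _ _
      _ ≤ ‖a‖ + ‖b‖ + ‖c‖ + ‖d‖ + ‖e‖ := by gcongr; exact norm_add_le _ _
  have ha : ‖a‖ ≤ 1/2 * (‖η - η'‖ * ‖X‖) := by
    rw [norm_smul, Real.norm_eq_abs]
    have := norm_cp_le (η - η') X
    rw [show |(1/2 : ℝ)| = 1/2 by norm_num]
    nlinarith
  have hb : ‖b‖ ≤ 1/2 * (‖η'‖ * ‖X - X'‖) := by
    rw [norm_smul, Real.norm_eq_abs]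
    have := norm_cp_le η' (X - X')
    rw [show |(1/2 : ℝ)| = 1/2 by norm_num]
    nlinarith
  have hc : ‖c‖ ≤ 1/4 * (‖η - η'‖ * ‖X‖) := by
    rw [norm_smul, Real.norm_eq_abs, abs_mul, show |(1/4 : ℝ)| = 1/4 by norm_num]
    have h3 := abs_dot_le (η - η') X
    nlinarith [abs_nonneg ((η - η') ⬝ᵥ X), norm_nonneg η,
      mul_nonneg (norm_nonneg (η - η')) (norm_nonneg X)]
  have hd2 : ‖d‖ ≤ 1/4 * (‖η'‖ * ‖X - X'‖) := by
    rw [norm_smul, Real.norm_eq_abs, abs_mul, show |(1/4 : ℝ)| = 1/4 by norm_num]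
    have h3 := abs_dot_le η' (X - X')
    rw [WithLp.ofLp_sub] at h3
    nlinarith [abs_nonneg (η' ⬝ᵥ (X - X')), norm_nonneg η,
      mul_nonneg (norm_nonneg η') (norm_nonneg (X - X'))]
  have he : ‖e‖ ≤ 1/4 * (r * ‖η - η'‖) := by
    rw [norm_smul, Real.norm_eq_abs, abs_mul, show |(1/4 : ℝ)| = 1/4 by norm_num]
    have h3 := abs_dot_le η' X'
    have h4 : ‖η'‖ * ‖X'‖ ≤ r := by nlinarith [norm_nonneg η', norm_nonneg X']
    nlinarith [abs_nonneg (η' ⬝ᵥ X'), norm_nonneg (η - η'),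
      mul_le_mul_of_nonneg_right (le_trans h3 h4) (norm_nonneg (η - η'))]
  have hXr : ‖η - η'‖ * ‖X‖ ≤ ‖η - η'‖ * r := by
    exact mul_le_mul_of_nonneg_left hX (norm_nonneg _)
  nlinarith [norm_nonneg (η - η'), norm_nonneg (X - X'), norm_nonneg η',
    mul_nonneg (norm_nonneg η') (norm_nonneg (X - X'))]


/-- Identity coercion into `E3`. -/
def toE3 (v : Fin 3 → ℝ) : E3 := WithLp.toLp 2 v

/-- The fixed-point map of the implicit midpoint step. -/
def Fmap (Pv : E3) (ηf : E3 × E3 → E3) (p : E3 × E3) : E3 × E3 :=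
  (Pv - Pp (ηf p) p.1, p.1 + Pp (-(ηf p)) p.1 - Pp (ηf p) p.2)

lemma core (R : ℝ) (hR : 0 < R) (Pv : E3) (hPv : ‖Pv‖ = R)
    (ηf : E3 × E3 → E3)
    (hηnorm : ∀ p : E3 × E3, ‖p.1‖ ≤ 3*R → ‖p.2‖ ≤ 3*R → ‖ηf p‖ ≤ 1/100)
    (hηdiff : ∀ p q : E3 × E3,
      3*R*‖ηf p - ηf q‖ ≤ (1/100) * max ‖p.1-q.1‖ ‖p.2-q.2‖) :
    ∃! p : E3 × E3, ‖p.1‖ ≤ 2*R ∧ ‖p.2‖ ≤ 2*R ∧ Fmap Pv ηf p = p := by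
  set Fm := Fmap Pv ηf with hFmdef
  -- Key difference estimates, valid on the `3R` region.
  have hdiff : ∀ p q : E3 × E3, ‖p.1‖ ≤ 3*R → ‖p.2‖ ≤ 3*R → ‖q.1‖ ≤ 3*R → ‖q.2‖ ≤ 3*R →
      ‖(Fm p).1 - (Fm q).1‖ ≤ (2/100) * max ‖p.1-q.1‖ ‖p.2-q.2‖ ∧
      ‖(Fm p).2 - (Fm q).2‖ ≤ ‖p.1-q.1‖ + (4/100) * max ‖p.1-q.1‖ ‖p.2-q.2‖ := by
    intro p q hp1 hp2 hq1 hq2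
    have hm0 : (0:ℝ) ≤ max ‖p.1-q.1‖ ‖p.2-q.2‖ := le_trans (norm_nonneg _) (le_max_left _ _)
    have hma : ‖p.1-q.1‖ ≤ max ‖p.1-q.1‖ ‖p.2-q.2‖ := le_max_left _ _
    have hmb : ‖p.2-q.2‖ ≤ max ‖p.1-q.1‖ ‖p.2-q.2‖ := le_max_right _ _
    have hηp := hηnorm p hp1 hp2
    have hηq := hηnorm q hq1 hq2
    have hηp1 : ‖ηf p‖ ≤ 1 := by linarith
    have hηq1 : ‖ηf q‖ ≤ 1 := by linarith
    have hd := hηdiff p q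
    have hd' : 3*R*‖ηf q - ηf p‖ ≤ (1/100) * max ‖p.1-q.1‖ ‖p.2-q.2‖ := by
      rw [norm_sub_rev]; exact hd
    constructor
    · have e1 : (Fm p).1 - (Fm q).1 = Pp (ηf q) q.1 - Pp (ηf p) p.1 := by
        show (Pv - Pp (ηf p) p.1) - (Pv - Pp (ηf q) q.1) = _
        abel
      rw [e1]
      have h1 := Pp_diff_le (ηf q) (ηf p) q.1 p.1 (3*R) hηq1 hηp1 hq1 hp1
      have h2 : ‖ηf p‖ * ‖q.1 - p.1‖ ≤ (1/100) * max ‖p.1-q.1‖ ‖p.2-q.2‖ := by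
        rw [norm_sub_rev]
        exact mul_le_mul hηp hma (norm_nonneg _) (by norm_num)
      linarith
    · have e2 : (Fm p).2 - (Fm q).2 =
          (p.1 - q.1) + (Pp (-(ηf p)) p.1 - Pp (-(ηf q)) q.1)
            - (Pp (ηf p) p.2 - Pp (ηf q) q.2) := by
        show (p.1 + Pp (-(ηf p)) p.1 - Pp (ηf p) p.2)
            - (q.1 + Pp (-(ηf q)) q.1 - Pp (ηf q) q.2) = _
        abel
      rw [e2]
      have t : ‖(p.1 - q.1) + (Pp (-(ηf p)) p.1 - Pp (-(ηf q)) q.1)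
            - (Pp (ηf p) p.2 - Pp (ηf q) q.2)‖
          ≤ ‖p.1 - q.1‖ + ‖Pp (-(ηf p)) p.1 - Pp (-(ηf q)) q.1‖
            + ‖Pp (ηf p) p.2 - Pp (ηf q) q.2‖ := by
        calc _ ≤ ‖(p.1 - q.1) + (Pp (-(ηf p)) p.1 - Pp (-(ηf q)) q.1)‖
              + ‖Pp (ηf p) p.2 - Pp (ηf q) q.2‖ := norm_sub_le _ _
          _ ≤ _ := by gcongr; exact norm_add_le _ _
      have hA := Pp_diff_le (-(ηf p)) (-(ηf q)) p.1 q.1 (3*R)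
        (by rw [norm_neg]; exact hηp1) (by rw [norm_neg]; exact hηq1) hp1 hq1
      have hnn : ‖-(ηf p) - -(ηf q)‖ = ‖ηf p - ηf q‖ := by
        rw [show -(ηf p) - -(ηf q) = -(ηf p - ηf q) by abel, norm_neg]
      rw [hnn, norm_neg] at hA
      have hA2 : ‖ηf q‖ * ‖p.1 - q.1‖ ≤ (1/100) * max ‖p.1-q.1‖ ‖p.2-q.2‖ :=
        mul_le_mul hηq hma (norm_nonneg _) (by norm_num)
      have hB := Pp_diff_le (ηf p) (ηf q) p.2 q.2 (3*R) hηp1 hηq1 hp2 hq2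
      have hB2 : ‖ηf q‖ * ‖p.2 - q.2‖ ≤ (1/100) * max ‖p.1-q.1‖ ‖p.2-q.2‖ :=
        mul_le_mul hηq hmb (norm_nonneg _) (by norm_num)
      linarith
  -- the invariant set
  set S : Set (E3 × E3) := {p | ‖p.1‖ ≤ 3/2*R ∧ ‖p.2‖ ≤ 2*R} with hSdef
  have hS3 : ∀ p ∈ S, ‖p.1‖ ≤ 3*R ∧ ‖p.2‖ ≤ 3*R := by
    rintro p ⟨h1, h2⟩; constructor <;> linarith
  have hFS : ∀ p ∈ S, Fm p ∈ S := by
    rintro p ⟨h1, h2⟩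
    have h13 : ‖p.1‖ ≤ 3*R := by linarith
    have h23 : ‖p.2‖ ≤ 3*R := by linarith
    have hη := hηnorm p h13 h23
    have hη1 : ‖ηf p‖ ≤ 1 := by linarith
    have hη1' : ‖-(ηf p)‖ ≤ 1 := by rw [norm_neg]; exact hη1
    have hPa := Pp_norm_le (ηf p) p.1 hη1
    have hPa' := Pp_norm_le (-(ηf p)) p.1 hη1'
    rw [norm_neg] at hPa'
    have hPb := Pp_norm_le (ηf p) p.2 hη1
    have m1 : ‖ηf p‖ * ‖p.1‖ ≤ (1/100)*(3/2*R) :=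
      mul_le_mul hη h1 (norm_nonneg _) (by norm_num)
    have m2 : ‖ηf p‖ * ‖p.2‖ ≤ (1/100)*(2*R) :=
      mul_le_mul hη h2 (norm_nonneg _) (by norm_num)
    constructor
    · show ‖Pv - Pp (ηf p) p.1‖ ≤ 3/2*R
      have := norm_sub_le Pv (Pp (ηf p) p.1)
      rw [hPv] at this
      linarith
    · show ‖p.1 + Pp (-(ηf p)) p.1 - Pp (ηf p) p.2‖ ≤ 2*R
      have t : ‖p.1 + Pp (-(ηf p)) p.1 - Pp (ηf p) p.2‖
          ≤ ‖p.1‖ + ‖Pp (-(ηf p)) p.1‖ + ‖Pp (ηf p) p.2‖ := by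
        calc _ ≤ ‖p.1 + Pp (-(ηf p)) p.1‖ + ‖Pp (ηf p) p.2‖ := norm_sub_le _ _
          _ ≤ _ := by gcongr; exact norm_add_le _ _
      linarith
  -- uniqueness of fixed points in the 2R-balls
  have huniq : ∀ p q : E3 × E3, ‖p.1‖ ≤ 2*R → ‖p.2‖ ≤ 2*R → ‖q.1‖ ≤ 2*R → ‖q.2‖ ≤ 2*R →
      Fm p = p → Fm q = q → p = q := by
    intro p q hp1 hp2 hq1 hq2 hfp hfq
    have hb : ‖p.1‖ ≤ 3*R ∧ ‖p.2‖ ≤ 3*R ∧ ‖q.1‖ ≤ 3*R ∧ ‖q.2‖ ≤ 3*R := by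
      refine ⟨?_, ?_, ?_, ?_⟩ <;> linarith
    have d := hdiff p q hb.1 hb.2.1 hb.2.2.1 hb.2.2.2
    rw [hfp, hfq] at d
    have hm0 : (0:ℝ) ≤ max ‖p.1-q.1‖ ‖p.2-q.2‖ := le_trans (norm_nonneg _) (le_max_left _ _)
    have hm : max ‖p.1-q.1‖ ‖p.2-q.2‖ ≤ (6/100) * max ‖p.1-q.1‖ ‖p.2-q.2‖ :=
      max_le (by linarith [d.1]) (by linarith [d.1, d.2])
    have hmz : max ‖p.1-q.1‖ ‖p.2-q.2‖ ≤ 0 := by linarith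
    have ha : p.1 = q.1 := by
      have : ‖p.1 - q.1‖ = 0 :=
        le_antisymm (le_trans (le_max_left _ _) hmz) (norm_nonneg _)
      exact sub_eq_zero.1 (norm_eq_zero.1 this)
    have hb2 : p.2 = q.2 := by
      have : ‖p.2 - q.2‖ = 0 :=
        le_antisymm (le_trans (le_max_right _ _) hmz) (norm_nonneg _)
      exact sub_eq_zero.1 (norm_eq_zero.1 this)
    exact Prod.ext ha hb2
  -- existence via the Banach fixed point theorem for `Fm ∘ Fm` on `S`
  have hScl : IsClosed S := by
    refine IsClosed.inter ?_ ?_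
    · exact isClosed_le (continuous_fst.norm) continuous_const
    · exact isClosed_le (continuous_snd.norm) continuous_const
  haveI : Nonempty S := by
    refine ⟨⟨((0:E3),(0:E3)), ?_, ?_⟩⟩
    · show ‖(0:E3)‖ ≤ 3/2*R
      rw [norm_zero]; linarith
    · show ‖(0:E3)‖ ≤ 2*R
      rw [norm_zero]; linarith
  haveI : CompleteSpace S := hScl.completeSpace_coe
  set g : S → S := fun x => ⟨Fm (Fm x.1), hFS _ (hFS _ x.2)⟩ with hgdef
  have key : ∀ p q : E3 × E3, p ∈ S → q ∈ S →
      max ‖(Fm (Fm p)).1 - (Fm (Fm q)).1‖ ‖(Fm (Fm p)).2 - (Fm (Fm q)).2‖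
        ≤ (1/10) * max ‖p.1-q.1‖ ‖p.2-q.2‖ := by
    intro p q hpS hqS
    obtain ⟨hp1, hp2⟩ := hS3 p hpS
    obtain ⟨hq1, hq2⟩ := hS3 q hqS
    obtain ⟨hFp1, hFp2⟩ := hS3 _ (hFS p hpS)
    obtain ⟨hFq1, hFq2⟩ := hS3 _ (hFS q hqS)
    have d1 := hdiff p q hp1 hp2 hq1 hq2
    have d2 := hdiff (Fm p) (Fm q) hFp1 hFp2 hFq1 hFq2
    have hm0 : (0:ℝ) ≤ max ‖p.1-q.1‖ ‖p.2-q.2‖ := le_trans (norm_nonneg _) (le_max_left _ _)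
    have hma : ‖p.1-q.1‖ ≤ max ‖p.1-q.1‖ ‖p.2-q.2‖ := le_max_left _ _
    have hmF : max ‖(Fm p).1 - (Fm q).1‖ ‖(Fm p).2 - (Fm q).2‖
        ≤ (104/100) * max ‖p.1-q.1‖ ‖p.2-q.2‖ :=
      max_le (by linarith [d1.1]) (by linarith [d1.2])
    refine max_le ?_ ?_
    · have := d2.1
      have hmF0 : (0:ℝ) ≤ max ‖(Fm p).1 - (Fm q).1‖ ‖(Fm p).2 - (Fm q).2‖ :=
        le_trans (norm_nonneg _) (le_max_left _ _)
      nlinarith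
    · have := d2.2
      have h1 : ‖(Fm p).1 - (Fm q).1‖ ≤ (2/100) * max ‖p.1-q.1‖ ‖p.2-q.2‖ := d1.1
      have hmF0 : (0:ℝ) ≤ max ‖(Fm p).1 - (Fm q).1‖ ‖(Fm p).2 - (Fm q).2‖ :=
        le_trans (norm_nonneg _) (le_max_left _ _)
      nlinarith
  have hg : ContractingWith (1/10 : NNReal) g := by
    constructor
    · rw [← NNReal.coe_lt_coe]
      norm_num
    · apply LipschitzWith.of_dist_le_mul
      intro x y
      rw [Subtype.dist_eq, Prod.dist_eq, Subtype.dist_eq, Prod.dist_eq]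
      simp only [dist_eq_norm]
      have hcoe : ((1/10 : NNReal) : ℝ) = 1/10 := by norm_num
      rw [hcoe]
      exact key x.1 y.1 x.2 y.2
  set z := ContractingWith.fixedPoint g hg with hzdef
  have hz : g z = z := hg.fixedPoint_isFixedPt
  have hFz_mem : Fm z.1 ∈ S := hFS _ z.2
  have hFz_fix : g ⟨Fm z.1, hFz_mem⟩ = ⟨Fm z.1, hFz_mem⟩ := by
    apply Subtype.ext
    show Fm (Fm (Fm z.1)) = Fm z.1
    have h1 : Fm (Fm z.1) = z.1 := congrArg Subtype.val hz
    exact congrArg Fm h1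
  have hxfix : Fm z.1 = z.1 := by
    have h2 := hg.fixedPoint_unique (x := ⟨Fm z.1, hFz_mem⟩) hFz_fix
    exact congrArg Subtype.val h2
  obtain ⟨hz1, hz2⟩ := z.2
  refine ⟨z.1, ⟨by linarith, by linarith, hxfix⟩, ?_⟩
  rintro y ⟨hy1, hy2, hyfix⟩
  exact huniq y z.1 hy1 hy2 (by linarith) (by linarith) hyfix hxfix

end MidAux

/-- For every sufficiently small time step, and every truncated Wiener increment `w̄` with
`|w̄| ≤ √(4|log Δt|Δt)`, the implicit one-step equations of the stochastic variational
midpoint integrator for the free rigid body (inertia `𝕀`, stochastic Hamiltonian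
`h₁(Π) = χ·Π`) have a unique solution `(A,B)` in the product of closed balls of radius
`2R` around the origin. -/
theorem midpoint_step_unique_solution
    (R : ℝ) (hR : 0 < R) (Iinv : Matrix (Fin 3) (Fin 3) ℝ) (χ : Fin 3 → ℝ) :
    ∃ δ : ℝ, 0 < δ ∧ δ < 1 ∧
      ∀ Δt : ℝ, 0 < Δt → Δt ≤ δ →
      ∀ wbar : ℝ, |wbar| ≤ Real.sqrt (4 * |Real.log Δt| * Δt) →
      ∀ Pv : Fin 3 → ℝ, e3norm Pv = R →
      ∃! AB : (Fin 3 → ℝ) × (Fin 3 → ℝ),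
        e3norm AB.1 ≤ 2 * R ∧ e3norm AB.2 ≤ 2 * R ∧
        (let ξ : Fin 3 → ℝ :=
          (1 / 2 : ℝ) • Iinv.mulVec ((1 / 2 : ℝ) • (AB.1 + AB.2)) +
            (1 / 2 * (wbar / Δt)) • χ
        dplus Δt ξ AB.1 = Pv ∧ dplus Δt ξ AB.2 = dminus Δt ξ AB.1) := by
  classical
  set T : MidAux.E3 →L[ℝ] MidAux.E3 := LinearMap.toContinuousLinearMap
    { toFun := fun x => WithLp.toLp 2 (Iinv.mulVec x)
      map_add' := fun x y => by simp [Matrix.mulVec_add]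
      map_smul' := fun r x => by simp [Matrix.mulVec_smul] } with hTdef
  have hT : ∀ x : MidAux.E3, T x = WithLp.toLp 2 (Iinv.mulVec x) := fun _ => rfl
  clear_value T
  set C : ℝ := ‖T‖ with hCdef
  set χE : MidAux.E3 := WithLp.toLp 2 χ with hχEdef
  set c : ℝ := ‖χE‖ with hcdef
  have hC : 0 ≤ C := norm_nonneg _
  have hc : 0 ≤ c := norm_nonneg _
  have hCR1 : (0:ℝ) < C*R+1 := by nlinarith
  set δ : ℝ := min (1/2) (min (1/(300*(C*R+1))) ((1/(80000*(c+1)^2))^2)) with hδdef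
  have hδpos : 0 < δ := by
    apply lt_min (by norm_num)
    apply lt_min (by positivity) (by positivity)
  refine ⟨δ, hδpos, lt_of_le_of_lt (min_le_left _ _) (by norm_num), ?_⟩
  intro Δt hΔt hΔtδ wbar hwbar Pv hPv
  -- numeric consequences of `Δt ≤ δ`
  have hΔt2 : Δt ≤ 1/2 := le_trans hΔtδ (min_le_left _ _)
  have hδ1 : Δt ≤ 1/(300*(C*R+1)) :=
    le_trans hΔtδ (le_trans (min_le_right _ _) (min_le_left _ _))
  have hδ2 : Δt ≤ (1/(80000*(c+1)^2))^2 :=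
    le_trans hΔtδ (le_trans (min_le_right _ _) (min_le_right _ _))
  have h300 : (0:ℝ) < 300*(C*R+1) := by nlinarith
  have hδ1' : Δt * (300*(C*R+1)) ≤ 1 := by
    have h := mul_le_mul_of_nonneg_right hδ1 h300.le
    rwa [one_div, inv_mul_cancel₀ (ne_of_gt h300)] at h
  -- bound on the truncated increment
  have hsq : 0 < Real.sqrt Δt := Real.sqrt_pos.2 hΔt
  have hlog : -Real.log Δt ≤ 2 / Real.sqrt Δt := by
    have h1 : Real.log ((Real.sqrt Δt)⁻¹) ≤ (Real.sqrt Δt)⁻¹ - 1 :=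
      Real.log_le_sub_one_of_pos (by positivity)
    have h2 : Real.log ((Real.sqrt Δt)⁻¹) = -(Real.log Δt / 2) := by
      rw [Real.log_inv, Real.log_sqrt hΔt.le]
    rw [h2] at h1
    have h5 : 2 / Real.sqrt Δt = 2 * (Real.sqrt Δt)⁻¹ := by
      rw [div_eq_mul_inv]
    rw [h5]
    linarith
  have habs : |Real.log Δt| = -Real.log Δt :=
    abs_of_neg (Real.log_neg hΔt (by linarith))
  have hq : 4 * |Real.log Δt| * Δt ≤ 8*Real.sqrt Δt := by
    rw [habs]
    have h4 : (-Real.log Δt) * Δt ≤ (2/Real.sqrt Δt) * Δt :=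
      mul_le_mul_of_nonneg_right hlog hΔt.le
    have h5 : (2/Real.sqrt Δt)*Δt = 2*Real.sqrt Δt := by
      rw [div_mul_eq_mul_div, mul_div_assoc, Real.div_sqrt]
    rw [h5] at h4
    linarith
  have hsd : Real.sqrt Δt ≤ 1/(80000*(c+1)^2) := by
    have h := Real.sqrt_le_sqrt hδ2
    rwa [Real.sqrt_sq (by positivity)] at h
  have hq2 : 4 * |Real.log Δt| * Δt ≤ (1/(100*(c+1)))^2 := by
    have h1 : 8*Real.sqrt Δt ≤ 8*(1/(80000*(c+1)^2)) := by linarith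
    have h2 : 8*(1/(80000*(c+1)^2)) = (1/(100*(c+1)))^2 := by
      field_simp
      ring
    linarith
  have hw : |wbar| ≤ 1/(100*(c+1)) := by
    have h6 := Real.sqrt_le_sqrt hq2
    rw [Real.sqrt_sq (by positivity)] at h6
    exact le_trans hwbar h6
  have hw' : |wbar| * (100*(c+1)) ≤ 1 := by
    have hpos : (0:ℝ) < 100*(c+1) := by positivity
    have h := mul_le_mul_of_nonneg_right hw hpos.le
    rwa [one_div, inv_mul_cancel₀ (ne_of_gt hpos)] at h
  clear_value C c δ
  -- the vector field
  set ξE : MidAux.E3 × MidAux.E3 → MidAux.E3 := fun p =>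
      (1 / 2 : ℝ) • MidAux.toE3 (Iinv.mulVec ((1 / 2 : ℝ) • (p.1 + p.2))) +
        (1 / 2 * (wbar / Δt)) • χE with hξE
  set ηf : MidAux.E3 × MidAux.E3 → MidAux.E3 := fun p => Δt • ξE p with hηf
  have hηid : ∀ p : MidAux.E3 × MidAux.E3,
      ηf p = (Δt/4) • T (p.1 + p.2) + (wbar/2) • χE := by
    intro p
    have hΔne : Δt ≠ 0 := ne_of_gt hΔt
    ext i
    simp only [hηf, hξE]
    rw [hT]
    simp only [MidAux.toE3, PiLp.add_apply, PiLp.smul_apply, Pi.add_apply, Pi.smul_apply, smul_eq_mul,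
      Matrix.mulVec, dotProduct, Fin.sum_univ_three]
    field_simp
    ring
  have hηnorm : ∀ p : MidAux.E3 × MidAux.E3, ‖p.1‖ ≤ 3*R → ‖p.2‖ ≤ 3*R →
      ‖ηf p‖ ≤ 1/100 := by
    intro p h1 h2
    rw [hηid]
    have t1 : ‖(Δt/4) • T (p.1+p.2) + (wbar/2) • χE‖
        ≤ |Δt/4| * ‖T (p.1+p.2)‖ + |wbar/2| * ‖χE‖ := by
      refine le_trans (norm_add_le _ _) ?_
      rw [norm_smul, norm_smul, Real.norm_eq_abs, Real.norm_eq_abs]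
    have t2 : ‖T (p.1+p.2)‖ ≤ C * ‖p.1+p.2‖ := by
      rw [hCdef]; exact T.le_opNorm _
    have t3 : ‖p.1+p.2‖ ≤ 6*R := le_trans (norm_add_le _ _) (by linarith)
    have t4 : |Δt/4| = Δt/4 := abs_of_nonneg (by linarith)
    have t5 : |wbar/2| = |wbar|/2 := by rw [abs_div]; norm_num
    rw [t4, t5] at t1
    have t6 : C * ‖p.1+p.2‖ ≤ C*(6*R) := mul_le_mul_of_nonneg_left t3 hC
    have t7 : (Δt/4) * ‖T (p.1+p.2)‖ ≤ (Δt/4)*(C*(6*R)) :=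
      mul_le_mul_of_nonneg_left (le_trans t2 t6) (by linarith)
    have t8 : (Δt/4)*(C*(6*R)) ≤ 1/200 := by
      clear * - hδ1' hΔt hC hR
      nlinarith
    have t9 : (|wbar|/2)*c ≤ 1/200 := by
      clear * - hw' hc
      nlinarith [abs_nonneg wbar]
    calc ‖(Δt/4) • T (p.1+p.2) + (wbar/2) • χE‖
        ≤ (Δt/4) * ‖T (p.1+p.2)‖ + (|wbar|/2) * ‖χE‖ := t1
      _ ≤ 1/200 + 1/200 := by rw [← hcdef]; linarith
      _ ≤ 1/100 := by norm_num
  have hηdiff : ∀ p q : MidAux.E3 × MidAux.E3,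
      3*R*‖ηf p - ηf q‖ ≤ (1/100) * max ‖p.1-q.1‖ ‖p.2-q.2‖ := by
    intro p q
    have hid : ηf p - ηf q = (Δt/4) • T ((p.1-q.1) + (p.2-q.2)) := by
      have h0 : T ((p.1-q.1)+(p.2-q.2)) = T (p.1+p.2) - T (q.1+q.2) := by
        rw [← map_sub]
        congr 1
        abel
      rw [hηid p, hηid q, h0, smul_sub]
      abel
    rw [hid, norm_smul, Real.norm_eq_abs, abs_of_nonneg (by linarith : (0:ℝ) ≤ Δt/4)]
    have t2 : ‖T ((p.1-q.1)+(p.2-q.2))‖ ≤ C * ‖(p.1-q.1)+(p.2-q.2)‖ := by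
      rw [hCdef]; exact T.le_opNorm _
    have hma : ‖p.1-q.1‖ ≤ max ‖p.1-q.1‖ ‖p.2-q.2‖ := le_max_left _ _
    have hmb : ‖p.2-q.2‖ ≤ max ‖p.1-q.1‖ ‖p.2-q.2‖ := le_max_right _ _
    have hm0 : (0:ℝ) ≤ max ‖p.1-q.1‖ ‖p.2-q.2‖ := le_trans (norm_nonneg _) hma
    have t3 : ‖(p.1-q.1)+(p.2-q.2)‖ ≤ 2 * max ‖p.1-q.1‖ ‖p.2-q.2‖ := by
      refine le_trans (norm_add_le _ _) ?_
      linarith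
    have t4 : C * ‖(p.1-q.1)+(p.2-q.2)‖ ≤ C * (2 * max ‖p.1-q.1‖ ‖p.2-q.2‖) :=
      mul_le_mul_of_nonneg_left t3 hC
    have t5 : ‖T ((p.1-q.1)+(p.2-q.2))‖ ≤ 2*C*(max ‖p.1-q.1‖ ‖p.2-q.2‖) := by
      calc ‖T ((p.1-q.1)+(p.2-q.2))‖ ≤ C * (2 * max ‖p.1-q.1‖ ‖p.2-q.2‖) :=
            le_trans t2 t4
        _ = 2*C*(max ‖p.1-q.1‖ ‖p.2-q.2‖) := by ring
    have t6 : (Δt/4) * ‖T ((p.1-q.1)+(p.2-q.2))‖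
        ≤ (Δt/4) * (2*C*(max ‖p.1-q.1‖ ‖p.2-q.2‖)) :=
      mul_le_mul_of_nonneg_left t5 (by linarith)
    have t7 : 3*R*((Δt/4) * ‖T ((p.1-q.1)+(p.2-q.2))‖)
        ≤ 3*R*((Δt/4)*(2*C*(max ‖p.1-q.1‖ ‖p.2-q.2‖))) :=
      mul_le_mul_of_nonneg_left t6 (by linarith)
    have t8 : 3*R*((Δt/4)*(2*C*(max ‖p.1-q.1‖ ‖p.2-q.2‖)))
        ≤ (1/100)*(max ‖p.1-q.1‖ ‖p.2-q.2‖) := by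
      clear * - hδ1' hΔt hC hR hm0
      nlinarith [mul_le_mul_of_nonneg_right hδ1' hm0, mul_nonneg hΔt.le hm0]
    linarith
  have hPvE : ‖MidAux.toE3 Pv‖ = R := by
    rw [← MidAux.e3norm_eq]; exact hPv
  have hcore := MidAux.core R hR (MidAux.toE3 Pv) hPvE ηf hηnorm hηdiff
  have hiff : ∀ p : MidAux.E3 × MidAux.E3,
      (e3norm p.1.ofLp ≤ 2 * R ∧ e3norm p.2.ofLp ≤ 2 * R ∧
        (let ξ : Fin 3 → ℝ :=
          (1 / 2 : ℝ) • Iinv.mulVec ((1 / 2 : ℝ) • (p.1.ofLp + p.2.ofLp)) +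
            (1 / 2 * (wbar / Δt)) • χ
        dplus Δt ξ p.1.ofLp = Pv ∧ dplus Δt ξ p.2.ofLp = dminus Δt ξ p.1.ofLp)) ↔
      (‖p.1‖ ≤ 2 * R ∧ ‖p.2‖ ≤ 2 * R ∧ MidAux.Fmap (MidAux.toE3 Pv) ηf p = p) := by
    intro p
    have eqv : ∀ (x y z : MidAux.E3), (x + y = z) ↔ (z - y = x) := by
      intro x y z
      constructor <;> intro h <;> rw [← h] <;> abel
    rw [MidAux.e3norm_eq p.1, MidAux.e3norm_eq p.2]
    dsimp only
    refine and_congr Iff.rfl (and_congr Iff.rfl ?_)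
    have hξ : ((1 / 2 : ℝ) • Iinv.mulVec ((1 / 2 : ℝ) • (p.1.ofLp + p.2.ofLp)) +
        (1 / 2 * (wbar / Δt)) • χ) = (ξE p).ofLp := rfl
    rw [hξ, MidAux.dplus_eq, MidAux.dplus_eq, MidAux.dminus_eq, Prod.ext_iff]
    simp only [MidAux.Fmap, hηf]
    constructor
    · rintro ⟨h1, h2⟩
      exact ⟨(eqv _ _ _).1 (WithLp.ofLp_injective 2 (show _ = (MidAux.toE3 Pv).ofLp from h1)),
        (eqv _ _ _).1 (WithLp.ofLp_injective 2 h2)⟩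
    · rintro ⟨h1, h2⟩
      exact ⟨congrArg WithLp.ofLp ((eqv _ _ _).2 h1), congrArg WithLp.ofLp ((eqv _ _ _).2 h2)⟩
  obtain ⟨p, hp, hpu⟩ := hcore
  refine ⟨(p.1.ofLp, p.2.ofLp), (hiff p).2 hp, ?_⟩
  intro y hy
  have h := hpu (WithLp.toLp 2 y.1, WithLp.toLp 2 y.2) ((hiff _).1 hy)
  rw [← h]
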